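/- arXiv:2207.05181 — 2 statements merged into one kernel-verified Lean document; each statement's English description precedes it below -/
import Mathlib

section
/- Let G be a connected graph on n ≥ 3 vertices with Harary index H(G) = ∑_{i<j} 1/d(v_i,v_j), reciprocal transmissions RTr(v_i) = ∑_{j≠i} 1/d(v_i,v_j), and generalized reciprocal distance matrix RD_α(G) = α·RT(G) + (1-α)·RD(G) for α ∈ [0,1]. Then the spread S_{RD_α}(G) = λ₁(RD_α) - λₙ(RD_α) satisfies S_{RD_α}(G) ≤ (2α² ∑_i RTr(v_i)² + 2(1-α)² ∑_{i≠j} (1/d_{ij})² - (8/n)α² H(G)²)^{1/2}. -/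
/-!
The spread is `λ_p - λ_q` for two eigenvalues of `M = RD_α(G)`, and for the mean `μ = tr M / n`
we have `(λ_p - λ_q)² ≤ 2((λ_p - μ)² + (λ_q - μ)²) ≤ 2 ∑ᵢ (λᵢ - μ)² = 2 tr(M²) - (2/n)(tr M)²`.
Reading the traces off the entries gives `tr M = 2αH(G)` and
`tr(M²) = α² ∑ᵢ RTr(vᵢ)² + (1-α)² ∑_{i≠j} d(vᵢ,vⱼ)⁻²`.
-/

open Matrix BigOperators Finset

variable {V : Type*} [Fintype V] [DecidableEq V]

/-- Reciprocal distance (Harary) matrix. -/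
noncomputable def RD (G : SimpleGraph V) : Matrix V V ℝ :=
  Matrix.of fun i j => if i = j then 0 else (1 : ℝ) / (G.dist i j)

/-- Reciprocal transmission of a vertex. -/
noncomputable def RTr (G : SimpleGraph V) (i : V) : ℝ := ∑ j, RD G i j

/-- Generalized reciprocal distance matrix. -/
noncomputable def RDa (α : ℝ) (G : SimpleGraph V) : Matrix V V ℝ :=
  α • Matrix.diagonal (RTr G) + (1 - α) • RD G

/-- Harary index. -/
noncomputable def harary (G : SimpleGraph V) : ℝ := (∑ i, RTr G i) / 2

/-- Reciprocal transmission regular graph. -/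
def TransRegular (G : SimpleGraph V) : Prop := ∀ i j : V, RTr G i = RTr G j

noncomputable def maxEig {M : Matrix V V ℝ} (hM : M.IsHermitian) : ℝ := ⨆ i, hM.eigenvalues i

noncomputable def minEig {M : Matrix V V ℝ} (hM : M.IsHermitian) : ℝ := ⨅ i, hM.eigenvalues i

/-- Spread of a real symmetric matrix. -/
noncomputable def spread {M : Matrix V V ℝ} (hM : M.IsHermitian) : ℝ := maxEig hM - minEig hM

theorem Matrix.IsHermitian.trace_mul_self_eq_sum_eigenvalues_sq {𝕜 : Type*} [RCLike 𝕜]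
    {A : Matrix V V 𝕜} (hA : A.IsHermitian) :
    (A * A).trace = ∑ i, (hA.eigenvalues i : 𝕜) ^ 2 := by
  conv_lhs => rw [hA.spectral_theorem, ← map_mul, Unitary.conjStarAlgAut_apply,
    trace_mul_cycle, Unitary.coe_star_mul_self, one_mul, diagonal_mul_diagonal, trace_diagonal]
  simp [sq]

theorem sum_sub_mean_sq {ι : Type*} [Fintype ι] (x : ι → ℝ) :
    ∑ i, (x i - (∑ j, x j) / Fintype.card ι) ^ 2
      = ∑ i, x i ^ 2 - (∑ i, x i) ^ 2 / Fintype.card ι := by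
  rcases isEmpty_or_nonempty ι with _ | _
  · simp
  have hcard : (Fintype.card ι : ℝ) ≠ 0 := Nat.cast_ne_zero.mpr Fintype.card_ne_zero
  simp only [sub_sq, sum_add_distrib, sum_sub_distrib, ← sum_mul, ← mul_sum, sum_const,
    card_univ, nsmul_eq_mul]
  field_simp
  ring

theorem sq_sub_le_two_mul_sum_sq_sub {ι : Type*} [Fintype ι] (x : ι → ℝ) (c : ℝ) (p q : ι) :
    (x p - x q) ^ 2 ≤ 2 * ∑ i, (x i - c) ^ 2 := by
  classical
  rcases eq_or_ne p q with rfl | hpq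
  · rw [sub_self, zero_pow two_ne_zero]
    positivity
  have hpair : (x p - c) ^ 2 + (x q - c) ^ 2 ≤ ∑ i, (x i - c) ^ 2 := by
    rw [← sum_pair (f := fun i => (x i - c) ^ 2) hpq]
    exact sum_le_sum_of_subset_of_nonneg (subset_univ _) fun i _ _ => sq_nonneg _
  nlinarith [sq_nonneg (x p + x q - 2 * c)]

theorem iSup_sub_iInf_sq_le {ι : Type*} [Fintype ι] (x : ι → ℝ) (c : ℝ) :
    ((⨆ i, x i) - ⨅ i, x i) ^ 2 ≤ 2 * ∑ i, (x i - c) ^ 2 := by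
  rcases isEmpty_or_nonempty ι with _ | _
  · simp [Real.iSup_of_isEmpty, Real.iInf_of_isEmpty]
  obtain ⟨p, hp⟩ := exists_eq_ciSup_of_finite (f := x)
  obtain ⟨q, hq⟩ := exists_eq_ciInf_of_finite (f := x)
  rw [← hp, ← hq]
  exact sq_sub_le_two_mul_sum_sq_sub x c p q

theorem spread_sq_le {M : Matrix V V ℝ} (hM : M.IsHermitian) :
    spread hM ^ 2 ≤ 2 * (M * M).trace - 2 / Fintype.card V * M.trace ^ 2 := by
  have hvar := iSup_sub_iInf_sq_le hM.eigenvalues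
    ((∑ i, hM.eigenvalues i) / Fintype.card V)
  rw [sum_sub_mean_sq] at hvar
  rw [hM.trace_mul_self_eq_sum_eigenvalues_sq, hM.trace_eq_sum_eigenvalues]
  simp only [RCLike.ofReal_real_eq_id, id_eq]
  calc spread hM ^ 2 ≤ _ := hvar
    _ = _ := by ring

theorem spread_le_sqrt {M : Matrix V V ℝ} (hM : M.IsHermitian) :
    spread hM ≤ √(2 * (M * M).trace - 2 / Fintype.card V * M.trace ^ 2) :=
  (le_abs_self _).trans (Real.abs_le_sqrt (spread_sq_le hM))

theorem RDa_apply_self (α : ℝ) (G : SimpleGraph V) (i : V) : RDa α G i i = α * RTr G i := by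
  simp [RDa, RD]

theorem RDa_apply_of_ne (α : ℝ) (G : SimpleGraph V) {i j : V} (hij : i ≠ j) :
    RDa α G i j = (1 - α) * (1 / G.dist i j) := by
  simp [RDa, RD, hij]

theorem trace_RDa (α : ℝ) (G : SimpleGraph V) : (RDa α G).trace = 2 * α * harary G := by
  simp only [trace, diag_apply, RDa_apply_self, ← mul_sum, harary]
  ring

theorem trace_RDa_mul_self (α : ℝ) (G : SimpleGraph V) :
    (RDa α G * RDa α G).trace = α ^ 2 * ∑ i, RTr G i ^ 2 +
      (1 - α) ^ 2 * ∑ i, ∑ j ∈ univ.erase i, ((1 : ℝ) / G.dist i j) ^ 2 := by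
  have hrow (i : V) : ∑ j, RDa α G i j * RDa α G j i = α ^ 2 * RTr G i ^ 2 +
      (1 - α) ^ 2 * ∑ j ∈ univ.erase i, ((1 : ℝ) / G.dist i j) ^ 2 := by
    rw [← add_sum_erase _ _ (mem_univ i), RDa_apply_self, mul_sum]
    congr 1
    · ring
    refine sum_congr rfl fun j hj => ?_
    have hji := ne_of_mem_erase hj
    rw [RDa_apply_of_ne α G hji.symm, RDa_apply_of_ne α G hji, SimpleGraph.dist_comm]
    ring
  simp only [trace, diag_apply, mul_apply, hrow, sum_add_distrib, ← mul_sum]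

theorem RDa_spread_upper_general {n : ℕ} (G : SimpleGraph (Fin n))
    (α : ℝ) (hH : (RDa α G).IsHermitian) :
    spread hH ≤ Real.sqrt (2 * α ^ 2 * ∑ i, (RTr G i) ^ 2 +
      2 * (1 - α) ^ 2 * ∑ i, ∑ j ∈ Finset.univ.erase i, ((1 : ℝ) / (G.dist i j)) ^ 2 -
      (8 / n) * α ^ 2 * (harary G) ^ 2) := by
  refine (spread_le_sqrt hH).trans_eq ?_
  rw [trace_RDa, trace_RDa_mul_self, Fintype.card_fin]
  congr 1
  ring

/-- Upper bound for the `RD_α`-spread of a connected graph in terms of reciprocal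
transmissions and the Harary index (Theorem 2.2). -/
theorem RDa_spread_upper {n : ℕ} (hn : 3 ≤ n) (G : SimpleGraph (Fin n)) (hG : G.Connected)
    (α : ℝ) (hα : α ∈ Set.Icc (0 : ℝ) 1) (hH : (RDa α G).IsHermitian) :
    spread hH ≤ Real.sqrt (2 * α ^ 2 * ∑ i, (RTr G i) ^ 2 +
      2 * (1 - α) ^ 2 * ∑ i, ∑ j ∈ Finset.univ.erase i, ((1 : ℝ) / (G.dist i j)) ^ 2 -
      (8 / n) * α ^ 2 * (harary G) ^ 2) :=
  RDa_spread_upper_general G α hH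
end

section
/- For α ∈ [1/2, 1] and any connected graph G, the matrix RD_α(G) = α RT(G) + (1-α)RD(G) is positive semidefinite; consequently S_{RD_α}(G) ≤ λ₁(RD_α(G)), with equality if and only if the smallest eigenvalue of RD_α(G) is 0. -/
/-!
Since `RD` is symmetric with nonnegative entries, the quadratic form of
`RD_α = α · diag(row sums of RD) + (1 - α) · RD` is
`∑_{i,j} RD_ij (α/2 (x_i² + x_j²) + (1 - α) x_i x_j)`, and each summand is nonnegative as soon as
`α ≥ |1 - α|`, i.e. `α ≥ 1/2`. So all eigenvalues are nonnegative, and the spread `λ₁ - λ_min`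
is at most `λ₁`, with equality exactly when `λ_min = 0`.
-/

open Matrix BigOperators Finset

variable {V : Type*} [Fintype V] [DecidableEq V]

omit [Fintype V] in
lemma RD_nonneg (G : SimpleGraph V) (i j : V) : 0 ≤ RD G i j := by
  simp only [RD, of_apply]
  split_ifs <;> positivity

omit [Fintype V] in
lemma RD_isSymm (G : SimpleGraph V) : (RD G).IsSymm := by
  refine Matrix.IsSymm.ext fun i j => ?_
  simp only [RD, of_apply, eq_comm (a := j), SimpleGraph.dist_comm]

section RowSumMatrix

variable {A : Matrix V V ℝ}

omit [DecidableEq V] in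
lemma sum_sum_mul_sq_comm (hA : A.IsSymm) (x : V → ℝ) :
    ∑ i, ∑ j, A i j * x i ^ 2 = ∑ i, ∑ j, A i j * x j ^ 2 := by
  rw [Finset.sum_comm]
  simp only [hA.apply]

lemma dotProduct_mulVec_rowSum_combination (hA : A.IsSymm) (α : ℝ) (x : V → ℝ) :
    x ⬝ᵥ (α • diagonal (fun i => ∑ j, A i j) + (1 - α) • A) *ᵥ x
      = ∑ i, ∑ j, A i j * (α / 2 * x i ^ 2 + α / 2 * x j ^ 2 + (1 - α) * (x i * x j)) := by
  have hD : x ⬝ᵥ diagonal (fun i => ∑ j, A i j) *ᵥ x = ∑ i, ∑ j, A i j * x i ^ 2 := by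
    simp only [dotProduct, mulVec_diagonal, Finset.sum_mul, Finset.mul_sum]
    exact Finset.sum_congr rfl fun i _ => Finset.sum_congr rfl fun j _ => by ring
  have hAx : x ⬝ᵥ A *ᵥ x = ∑ i, ∑ j, A i j * (x i * x j) := by
    simp only [dotProduct, mulVec, Finset.mul_sum]
    exact Finset.sum_congr rfl fun i _ => Finset.sum_congr rfl fun j _ => by ring
  have hsq := sum_sum_mul_sq_comm hA x
  calc x ⬝ᵥ (α • diagonal (fun i => ∑ j, A i j) + (1 - α) • A) *ᵥ x
      = α / 2 * ∑ i, ∑ j, A i j * x i ^ 2 + α / 2 * ∑ i, ∑ j, A i j * x j ^ 2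
          + (1 - α) * ∑ i, ∑ j, A i j * (x i * x j) := by
        rw [← hsq, add_mulVec, smul_mulVec, smul_mulVec, dotProduct_add, dotProduct_smul,
          dotProduct_smul, hD, hAx, smul_eq_mul, smul_eq_mul]
        ring
    _ = ∑ i, ∑ j, (α / 2 * (A i j * x i ^ 2) + α / 2 * (A i j * x j ^ 2)
          + (1 - α) * (A i j * (x i * x j))) := by
        simp only [Finset.sum_add_distrib, Finset.mul_sum]
    _ = _ := Finset.sum_congr rfl fun i _ => Finset.sum_congr rfl fun j _ => by ring

lemma isSymm_rowSum_combination (hA : A.IsSymm) (α : ℝ) :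
    (α • diagonal (fun i => ∑ j, A i j) + (1 - α) • A).IsSymm :=
  ((isSymm_diagonal _).smul α).add (hA.smul (1 - α))

lemma posSemidef_rowSum_combination (hA : A.IsSymm) (hA0 : ∀ i j, 0 ≤ A i j) {α : ℝ}
    (hα : 1 / 2 ≤ α) : (α • diagonal (fun i => ∑ j, A i j) + (1 - α) • A).PosSemidef := by
  refine .of_dotProduct_mulVec_nonneg
    (isHermitian_iff_isSymm.mpr (isSymm_rowSum_combination hA α)) fun x => ?_
  rw [star_trivial, dotProduct_mulVec_rowSum_combination hA]
  refine Finset.sum_nonneg fun i _ => Finset.sum_nonneg fun j _ => mul_nonneg (hA0 i j) ?_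
  nlinarith [sq_nonneg (x i + x j), sq_nonneg (x i - x j)]

end RowSumMatrix

lemma RDa_posSemidef (G : SimpleGraph V) {α : ℝ} (hα : 1 / 2 ≤ α) : (RDa α G).PosSemidef :=
  posSemidef_rowSum_combination (RD_isSymm G) (RD_nonneg G) hα

lemma minEig_nonneg {M : Matrix V V ℝ} (hM : M.IsHermitian) (hPSD : M.PosSemidef) :
    0 ≤ minEig hM :=
  Real.iInf_nonneg hPSD.eigenvalues_nonneg

theorem RDa_posSemidef_and_spread_le_general {n : ℕ} (G : SimpleGraph (Fin n))
    (α : ℝ) (hα : α ∈ Set.Icc (1 / 2 : ℝ) 1)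
    (hH : (RDa α G).IsHermitian) :
    (RDa α G).PosSemidef ∧ spread hH ≤ maxEig hH ∧
    (spread hH = maxEig hH ↔ minEig hH = 0) := by
  have hPSD := RDa_posSemidef G hα.1
  have hmin := minEig_nonneg hH hPSD
  exact ⟨hPSD, sub_le_self _ hmin, sub_eq_self⟩

/-- For `α ∈ [1/2, 1]`, `RD_α(G)` is positive semidefinite, hence the `RD_α`-spread is at most
the largest eigenvalue, with equality iff the smallest eigenvalue is `0`. -/
theorem RDa_posSemidef_and_spread_le {n : ℕ} (hn : 0 < n) (G : SimpleGraph (Fin n))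
    (hG : G.Connected) (α : ℝ) (hα : α ∈ Set.Icc (1 / 2 : ℝ) 1)
    (hH : (RDa α G).IsHermitian) :
    (RDa α G).PosSemidef ∧ spread hH ≤ maxEig hH ∧
    (spread hH = maxEig hH ↔ minEig hH = 0) :=
  RDa_posSemidef_and_spread_le_general G α hα hH
end
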